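/- Let r ≥ 1 be an integer, A_r = (a_1,…,a_r) ∈ ℤ_{>0}^r with every a_l odd, N_r = (n_1,…,n_r) ∈ ℤ_{≥0}^r, x ∈ ℤ_{≥0}, and s ∈ ℤ_{>0}. Then ∑_{M_r=0_r}^{N_r} (A_r·M_r + x)^s (−1)^{A_r·M_r} = (1/2^r) ∑_{S ⊆ {1,…,r}} (−1)^{|S| + A_S·(N_S+1_{|S|})} E_s(A_S·(N_S+1_{|S|}) + x, iπ; A_r). -/

import Mathlib

open scoped BigOperators

/-- The exponential power series `exp (w z) = ∑ wⁿ zⁿ / n!` in `ℂ⟦z⟧`. -/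
noncomputable def expS (w : ℂ) : PowerSeries ℂ :=
  PowerSeries.mk fun n => w ^ n / n.factorial

/-- `E : ℕ → ℂ → ℂ` is the family of generalized Euler polynomials attached to the vector
`a` and the constant `c`, i.e. it satisfies the generating-function identity
`2^r · exp(xz) = (∏ l, (1 − e^{a_l c} · exp(a_l z))) · ∑_m E_m(x,c;A_r) z^m/m!` in `ℂ⟦z⟧`. -/
def IsGenEulerPoly {ι : Type} [Fintype ι] (a : ι → ℕ) (c : ℂ) (E : ℕ → ℂ → ℂ) : Prop :=
  ∀ x : ℂ,
    PowerSeries.C ((2 : ℂ) ^ Fintype.card ι) * expS x =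
      (∏ l : ι, (1 - PowerSeries.C (Complex.exp ((a l : ℂ) * c)) * expS (a l))) *
        PowerSeries.mk (fun m => E m x / m.factorial)

lemma expS_eq (w : ℂ) : expS w = PowerSeries.rescale w (PowerSeries.exp ℂ) := by
  ext n
  simp [expS, PowerSeries.coeff_rescale, PowerSeries.coeff_exp, div_eq_mul_inv]

lemma expS_add (u v : ℂ) : expS (u + v) = expS u * expS v := by
  rw [expS_eq, expS_eq, expS_eq, PowerSeries.exp_mul_exp_eq_exp_add]

lemma expS_zero : expS 0 = 1 := by
  ext n
  simp [expS, PowerSeries.coeff_one, zero_pow_eq]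
  rcases eq_or_ne n 0 with h | h <;> simp [h]

lemma expS_pow (w : ℂ) (k : ℕ) : expS w ^ k = expS ((k : ℂ) * w) := by
  induction k with
  | zero => simp [expS_zero]
  | succ k ih => rw [pow_succ, ih, ← expS_add]; norm_num; ring_nf

lemma expS_sum {ι : Type*} (s : Finset ι) (f : ι → ℂ) :
    expS (∑ i ∈ s, f i) = ∏ i ∈ s, expS (f i) := by
  induction s using Finset.cons_induction with
  | empty => simp [expS_zero]
  | cons i s hi ih => rw [Finset.sum_cons, Finset.prod_cons, expS_add, ih]

lemma geom_aux {R : Type*} [CommRing R] (t : R) (k : ℕ) :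
    (1 + t) * ∑ m ∈ Finset.range k, (-t) ^ m = 1 - (-t) ^ k := by
  linear_combination -(geom_sum_mul (-t) k)

lemma coeff_expS (s : ℕ) (w : ℂ) : PowerSeries.coeff s (expS w) = w ^ s / s.factorial := by
  simp [expS]

/-- Theorem 1 (alternating case, `c = iπ`, all `a_l` odd):
`∑_{M_r=0_r}^{N_r} (A_r·M_r + x)^s (−1)^{A_r·M_r}
  = 2^{-r} ∑_{S} (−1)^{|S| + A_S·(N_S+1_{|S|})} E_s(A_S·(N_S+1_{|S|})+x, iπ; A_r)`. -/
theorem statement1 (r : ℕ) (hr : 1 ≤ r) (a : Fin r → ℕ) (ha : ∀ l, 0 < a l)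
    (hodd : ∀ l, Odd (a l))
    (N : Fin r → ℕ) (x : ℕ) (s : ℕ) (hs : 0 < s)
    (E : ℕ → ℂ → ℂ) (hE : IsGenEulerPoly a ((Real.pi : ℂ) * Complex.I) E) :
    (∑ M : (i : Fin r) → Fin (N i + 1),
        (((∑ i, a i * (M i : ℕ) : ℕ) : ℂ) + (x : ℂ)) ^ s *
          (-1 : ℂ) ^ (∑ i, a i * (M i : ℕ) : ℕ)) =
      (1 / 2 ^ r : ℂ) *
        ∑ S : Finset (Fin r),
          (-1 : ℂ) ^ (S.card + ∑ i ∈ S, a i * (N i + 1)) *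
            E s (((∑ i ∈ S, a i * (N i + 1) : ℕ) : ℂ) + (x : ℂ)) := by
  classical
  set e : Fin r → PowerSeries ℂ := fun l => expS (a l) with he
  set P : PowerSeries ℂ := ∏ l, (1 + e l) with hPdef
  have hexp : ∀ l : Fin r, Complex.exp ((a l : ℂ) * ((Real.pi : ℂ) * Complex.I)) = -1 := by
    intro l
    rw [Complex.exp_nat_mul, Complex.exp_pi_mul_I]
    exact (hodd l).neg_one_pow
  have hP : (∏ l, (1 - PowerSeries.C
      (Complex.exp ((a l : ℂ) * ((Real.pi : ℂ) * Complex.I))) * expS (a l))) = P := by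
    refine Finset.prod_congr rfl fun l _ => ?_
    rw [hexp l, map_neg, map_one]
    ring
  have hEP : ∀ y : ℂ,
      P * PowerSeries.mk (fun m => E m y / m.factorial) =
        PowerSeries.C ((2 : ℂ) ^ r) * expS y := by
    intro y
    rw [← hP]
    have h := (hE y).symm
    simpa using h
  have hP0 : P ≠ 0 := by
    intro h
    have h2 := congrArg (PowerSeries.constantCoeff) h
    have hc1 : ∀ l : Fin r, PowerSeries.constantCoeff (e l) = 1 := by
      intro l; simp [he, expS]
    rw [hPdef] at h2
    simp only [map_prod, map_add, map_one, map_zero] at h2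
    rw [Finset.prod_congr rfl (fun l _ => by rw [hc1 l])] at h2
    simp at h2
  -- key power series identity
  have key : PowerSeries.C ((2 : ℂ) ^ r) *
      (∑ M : (i : Fin r) → Fin (N i + 1),
        PowerSeries.C ((-1 : ℂ) ^ (∑ i, a i * (M i : ℕ))) *
          expS (((∑ i, a i * (M i : ℕ) : ℕ) : ℂ) + x)) =
      ∑ S : Finset (Fin r),
        PowerSeries.C ((-1 : ℂ) ^ (S.card + ∑ i ∈ S, a i * (N i + 1))) *
          PowerSeries.mk
            (fun m => E m (((∑ i ∈ S, a i * (N i + 1) : ℕ) : ℂ) + x) / m.factorial) := by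
    apply mul_left_cancel₀ hP0
    -- LHS: rewrite the M-sum as expS x * ∏ geometric sums
    have hG : (∑ M : (i : Fin r) → Fin (N i + 1),
        PowerSeries.C ((-1 : ℂ) ^ (∑ i, a i * (M i : ℕ))) *
          expS (((∑ i, a i * (M i : ℕ) : ℕ) : ℂ) + x)) =
        expS x * ∏ i, ∑ m ∈ Finset.range (N i + 1), (-(e i)) ^ m := by
      have h1 : ∀ i : Fin r, (∑ m ∈ Finset.range (N i + 1), (-(e i)) ^ m) =
          ∑ j : Fin (N i + 1), (-(e i)) ^ (j : ℕ) :=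
        fun i => (Fin.sum_univ_eq_sum_range _ _).symm
      rw [Finset.prod_congr rfl fun i _ => h1 i,
        Finset.prod_univ_sum (fun i => (Finset.univ : Finset (Fin (N i + 1))))
          (fun i j => (-(e i)) ^ (j : ℕ)),
        Fintype.piFinset_univ, Finset.mul_sum]
      refine Finset.sum_congr rfl fun M _ => ?_
      have hsign : ((-1 : ℂ) ^ (∑ i, a i * (M i : ℕ))) = ∏ i, (-1 : ℂ) ^ (M i : ℕ) := by
        rw [← Finset.prod_pow_eq_pow_sum]
        refine Finset.prod_congr rfl fun i _ => ?_
        rw [pow_mul, (hodd i).neg_one_pow]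
      have h2 : expS (((∑ i, a i * (M i : ℕ) : ℕ) : ℂ) + x) =
          expS x * ∏ i, (e i) ^ (M i : ℕ) := by
        push_cast
        rw [expS_add, expS_sum, mul_comm]
        congr 1
        refine Finset.prod_congr rfl fun i _ => ?_
        rw [he, expS_pow, mul_comm]
      rw [hsign, h2, map_prod]
      simp only [map_pow, map_neg, map_one]
      rw [Finset.prod_congr rfl (fun i (_ : i ∈ Finset.univ) => neg_pow (e i) (M i : ℕ)),
        Finset.prod_mul_distrib]
      ring
    rw [hG]
    have hprod : P * ∏ i, ∑ m ∈ Finset.range (N i + 1), (-(e i)) ^ m =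
        ∏ i, (1 - (-(e i)) ^ (N i + 1)) := by
      rw [hPdef, ← Finset.prod_mul_distrib]
      exact Finset.prod_congr rfl fun i _ => geom_aux _ _
    have hexpand : (∏ i, (1 - (-(e i)) ^ (N i + 1))) =
        ∑ S : Finset (Fin r), ∏ i ∈ S, -((-(e i)) ^ (N i + 1)) := by
      rw [Finset.prod_congr rfl (fun i (_ : i ∈ Finset.univ) =>
        (by ring : (1 : PowerSeries ℂ) - (-(e i)) ^ (N i + 1) =
          -((-(e i)) ^ (N i + 1)) + 1)), Finset.prod_add]
      simp [Finset.powerset_univ]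
    -- RHS
    rw [Finset.mul_sum]
    have hR : ∀ S : Finset (Fin r),
        P * (PowerSeries.C ((-1 : ℂ) ^ (S.card + ∑ i ∈ S, a i * (N i + 1))) *
          PowerSeries.mk
            (fun m => E m (((∑ i ∈ S, a i * (N i + 1) : ℕ) : ℂ) + x) / m.factorial)) =
        PowerSeries.C ((2 : ℂ) ^ r) *
          (expS x * ∏ i ∈ S, -((-(e i)) ^ (N i + 1))) := by
      intro S
      rw [mul_left_comm, hEP]
      have hy : expS (((∑ i ∈ S, a i * (N i + 1) : ℕ) : ℂ) + x) =
          expS x * ∏ i ∈ S, (e i) ^ (N i + 1) := by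
        push_cast
        rw [expS_add, expS_sum, mul_comm]
        congr 1
        refine Finset.prod_congr rfl fun i _ => ?_
        rw [he, expS_pow]
        push_cast
        ring_nf
      have hterm : ∀ i : Fin r, -((-(e i)) ^ (N i + 1)) =
          PowerSeries.C ((-1 : ℂ) ^ (1 + a i * (N i + 1))) * (e i) ^ (N i + 1) := by
        intro i
        have hsgn : ((-1 : ℂ) ^ (1 + a i * (N i + 1))) = (-1 : ℂ) ^ (1 + (N i + 1)) := by
          rw [pow_add, pow_add, pow_mul, (hodd i).neg_one_pow]
        rw [hsgn, neg_pow]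
        simp only [map_pow, map_neg, map_one]
        ring
      have hsign : ((-1 : ℂ) ^ (S.card + ∑ i ∈ S, a i * (N i + 1))) =
          ∏ i ∈ S, (-1 : ℂ) ^ (1 + a i * (N i + 1)) := by
        rw [Finset.prod_pow_eq_pow_sum, Finset.sum_add_distrib, Finset.sum_const,
          smul_eq_mul, mul_one]
      rw [Finset.prod_congr rfl (fun i _ => hterm i), Finset.prod_mul_distrib, ← map_prod,
        ← hsign, hy]
      ring
    rw [Finset.sum_congr rfl fun S _ => hR S]
    simp only [← Finset.mul_sum]
    rw [← hexpand, ← hprod]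
    ring
  -- extract coefficient s
  have hco := congrArg (PowerSeries.coeff s) key
  simp only [map_sum, PowerSeries.coeff_C_mul, coeff_expS, PowerSeries.coeff_mk] at hco
  have hfac : (s.factorial : ℂ) ≠ 0 := Nat.cast_ne_zero.mpr s.factorial_ne_zero
  have h2r : (2 : ℂ) ^ r ≠ 0 := pow_ne_zero _ two_ne_zero
  have h1 : ∀ M : (i : Fin r) → Fin (N i + 1),
      (-1 : ℂ) ^ (∑ i, a i * (M i : ℕ)) *
        ((((∑ i, a i * (M i : ℕ) : ℕ) : ℂ) + x) ^ s / s.factorial) =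
      (((∑ i, a i * (M i : ℕ) : ℕ) : ℂ) + x) ^ s *
        (-1 : ℂ) ^ (∑ i, a i * (M i : ℕ)) / s.factorial := fun M => by ring
  have h2 : ∀ S : Finset (Fin r),
      (-1 : ℂ) ^ (S.card + ∑ i ∈ S, a i * (N i + 1)) *
        (E s (((∑ i ∈ S, a i * (N i + 1) : ℕ) : ℂ) + x) / s.factorial) =
      (-1 : ℂ) ^ (S.card + ∑ i ∈ S, a i * (N i + 1)) *
        E s (((∑ i ∈ S, a i * (N i + 1) : ℕ) : ℂ) + x) / s.factorial := fun S => by ring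
  simp only [h1, h2, ← Finset.sum_div] at hco
  rw [← mul_div_assoc] at hco
  have hco2 := (div_left_inj' hfac).mp hco
  rw [← hco2, one_div, inv_mul_cancel_left₀ h2r]
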